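/- arXiv:1406.5651 — 6 statements merged into one kernel-verified Lean document; each statement's English description precedes it below -/
import Mathlib

section
/- Let t > 0, let η be a probability measure on [0,∞) with η({0}) = 0, and let φ : (0,∞) → [0,∞) satisfy ∫_{[0,∞)} e^{−λs} dη(s) = e^{−tφ(λ)} for every λ > 0. Then for every A > 0 one has η((A,∞)) ≤ (t/(1−e^{−1})) · ∫_0^{1/A} (φ(λ)/λ) dλ, where the integral may be infinite. -/
/-!
Since `1 - e^{-u} ≥ (1 - e⁻¹) u` on `[0, 1]`, for every `s > A` the kernel
`∫_0^{1/A} (1 - e^{-λs})/λ dλ` is at least `1 - e⁻¹`. Integrating in `s` against `η`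
and exchanging the integrals (Tonelli) gives
`(1 - e⁻¹) η((A,∞)) ≤ ∫_0^{1/A} (1 - e^{-tφ(λ)})/λ dλ`, and `1 - e^{-x} ≤ x` concludes.
-/

open MeasureTheory Set Real

lemma one_sub_exp_neg_le (x : ℝ) : 1 - exp (-x) ≤ x := by
  linarith [add_one_le_exp (-x)]

lemma one_sub_exp_neg_one_pos : 0 < 1 - exp (-1) := by
  linarith [exp_lt_one_iff.2 (neg_one_lt_zero (R := ℝ))]

lemma one_sub_exp_neg_one_mul_le {u : ℝ} (hu0 : 0 ≤ u) (hu1 : u ≤ 1) :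
    (1 - exp (-1)) * u ≤ 1 - exp (-u) := by
  have h := convexOn_exp.2 (mem_univ (0 : ℝ)) (mem_univ (-1 : ℝ))
    (by linarith : (0 : ℝ) ≤ 1 - u) hu0 (by ring)
  simp only [smul_eq_mul, mul_zero, mul_neg_one, zero_add, exp_zero, mul_one] at h
  linarith

lemma mul_le_one_sub_exp_neg_mul_div {A s l : ℝ} (hA : 0 < A) (hs : A ≤ s)
    (hl : l ∈ Ioo 0 A⁻¹) :
    (1 - exp (-1)) * A ≤ (1 - exp (-l * s)) / l := by
  obtain ⟨hl0, hlA⟩ := hl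
  have hlA' : l * A ≤ 1 := by
    calc l * A ≤ A⁻¹ * A := by gcongr
      _ = 1 := inv_mul_cancel₀ hA.ne'
  have hconvex := one_sub_exp_neg_one_mul_le (by positivity) hlA'
  have hmono : exp (-l * s) ≤ exp (-(l * A)) := by
    rw [exp_le_exp, neg_mul, neg_le_neg_iff]
    gcongr
  rw [le_div_iff₀ hl0]
  linarith

lemma ofReal_one_sub_exp_neg_one_le_lintegral {A s : ℝ} (hA : 0 < A) (hs : A ≤ s) :
    ENNReal.ofReal (1 - exp (-1)) ≤
      ∫⁻ l in Ioo 0 A⁻¹, ENNReal.ofReal ((1 - exp (-l * s)) / l) := by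
  calc ENNReal.ofReal (1 - exp (-1))
      = ENNReal.ofReal ((1 - exp (-1)) * A) * volume (Ioo 0 A⁻¹) := by
        rw [volume_Ioo, sub_zero, ← ENNReal.ofReal_mul (mul_pos one_sub_exp_neg_one_pos hA).le,
          mul_assoc, mul_inv_cancel₀ hA.ne', mul_one]
    _ = ∫⁻ _ in Ioo 0 A⁻¹, ENNReal.ofReal ((1 - exp (-1)) * A) :=
        (setLIntegral_const _ _).symm
    _ ≤ ∫⁻ l in Ioo 0 A⁻¹, ENNReal.ofReal ((1 - exp (-l * s)) / l) :=
        setLIntegral_mono' measurableSet_Ioo fun l hl =>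
          ENNReal.ofReal_le_ofReal (mul_le_one_sub_exp_neg_mul_div hA hs hl)

lemma lintegral_one_sub_exp_neg_mul_le {μ : Measure ℝ} [IsProbabilityMeasure μ] {l : ℝ}
    (hl : 0 < l) :
    ∫⁻ s in Ici 0, ENNReal.ofReal ((1 - exp (-l * s)) / l) ∂μ ≤
      ENNReal.ofReal ((1 - ∫ s in Ici 0, exp (-l * s) ∂μ) / l) := by
  have hexp_le_one : ∀ᵐ s ∂μ.restrict (Ici 0), exp (-l * s) ≤ 1 := by
    filter_upwards [ae_restrict_mem measurableSet_Ici] with s hs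
    rw [exp_le_one_iff, neg_mul, neg_nonpos]
    exact mul_nonneg hl.le hs
  have hint : Integrable (fun s => exp (-l * s)) (μ.restrict (Ici 0)) :=
    (integrable_const 1).mono' (by fun_prop) <| hexp_le_one.mono fun s hs => by
      rwa [norm_of_nonneg (exp_pos _).le]
  have hnonneg : 0 ≤ᵐ[μ.restrict (Ici 0)] fun s => (1 - exp (-l * s)) / l :=
    hexp_le_one.mono fun s hs => div_nonneg (sub_nonneg.2 hs) hl.le
  have hint' : Integrable (fun s => (1 - exp (-l * s)) / l) (μ.restrict (Ici 0)) :=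
    ((integrable_const 1).sub hint).div_const l
  rw [← ofReal_integral_eq_lintegral_ofReal hint' hnonneg, integral_div,
    integral_sub (integrable_const 1) hint, integral_const, smul_eq_mul, mul_one]
  gcongr
  rw [measureReal_restrict_apply_univ]
  exact measureReal_le_one

lemma ofReal_one_sub_exp_neg_one_mul_measure_Ioi_le (μ : Measure ℝ) [SFinite μ] {A : ℝ}
    (hA : 0 < A) :
    ENNReal.ofReal (1 - exp (-1)) * μ (Ioi A) ≤
      ∫⁻ l in Ioo 0 A⁻¹, ∫⁻ s in Ici 0,
        ENNReal.ofReal ((1 - exp (-l * s)) / l) ∂μ := by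
  have hmeas : Measurable (Function.uncurry fun s l : ℝ =>
      ENNReal.ofReal ((1 - exp (-l * s)) / l)) := by
    fun_prop
  calc ENNReal.ofReal (1 - exp (-1)) * μ (Ioi A)
      = ∫⁻ _ in Ioi A, ENNReal.ofReal (1 - exp (-1)) ∂μ := (setLIntegral_const _ _).symm
    _ ≤ ∫⁻ s in Ioi A,
          (∫⁻ l in Ioo 0 A⁻¹, ENNReal.ofReal ((1 - exp (-l * s)) / l)) ∂μ :=
        setLIntegral_mono' measurableSet_Ioi fun s hs =>
          ofReal_one_sub_exp_neg_one_le_lintegral hA (le_of_lt hs)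
    _ ≤ ∫⁻ s in Ici 0,
          (∫⁻ l in Ioo 0 A⁻¹, ENNReal.ofReal ((1 - exp (-l * s)) / l)) ∂μ :=
        lintegral_mono_set (Ioi_subset_Ici hA.le)
    _ = ∫⁻ l in Ioo 0 A⁻¹, ∫⁻ s in Ici 0,
          ENNReal.ofReal ((1 - exp (-l * s)) / l) ∂μ :=
        lintegral_lintegral_swap hmeas.aemeasurable

theorem stmt_0_general
    (t : ℝ) (ht : 0 < t)
    (η : Measure ℝ) [IsProbabilityMeasure η]
    (φ : ℝ → ℝ)
    (hLaplace : ∀ l : ℝ, 0 < l →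
      ∫ s in Set.Ici (0:ℝ), Real.exp (-l * s) ∂η = Real.exp (-(t * φ l)))
    (A : ℝ) (hA : 0 < A) :
    η (Set.Ioi A) ≤ ENNReal.ofReal (t / (1 - Real.exp (-1))) *
      ∫⁻ l in Set.Ioo (0:ℝ) A⁻¹, ENNReal.ofReal (φ l / l) := by
  have hc := one_sub_exp_neg_one_pos
  have hinner : ∀ l ∈ Ioo 0 A⁻¹,
      ∫⁻ s in Ici 0, ENNReal.ofReal ((1 - exp (-l * s)) / l) ∂η ≤
        ENNReal.ofReal t * ENNReal.ofReal (φ l / l) := fun l hl => by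
    refine (lintegral_one_sub_exp_neg_mul_le hl.1).trans ?_
    rw [hLaplace l hl.1, ← ENNReal.ofReal_mul ht.le, ← mul_div_assoc]
    exact ENNReal.ofReal_le_ofReal (div_le_div_of_nonneg_right (one_sub_exp_neg_le _) hl.1.le)
  have hbound : ENNReal.ofReal (1 - exp (-1)) * η (Ioi A) ≤
      ENNReal.ofReal t * ∫⁻ l in Ioo 0 A⁻¹, ENNReal.ofReal (φ l / l) := by
    rw [← lintegral_const_mul' _ _ ENNReal.ofReal_ne_top]
    exact (ofReal_one_sub_exp_neg_one_mul_measure_Ioi_le η hA).trans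
      (setLIntegral_mono' measurableSet_Ioo hinner)
  refine (ENNReal.mul_le_mul_iff_right (ENNReal.ofReal_pos.2 hc).ne' ENNReal.ofReal_ne_top).1 ?_
  rwa [← mul_assoc, ← ENNReal.ofReal_mul hc.le, mul_div_cancel₀ _ hc.ne']

/-- Tail estimate for a subordinator's one-dimensional law (Lemma 2.1 of the paper):
if `η` is a probability measure on `[0,∞)` with no atom at `0` whose Laplace transform
is `e^{-tφ(λ)}`, then `η((A,∞)) ≤ t/(1-e⁻¹) · ∫_0^{1/A} φ(λ)/λ dλ`. -/
theorem stmt_0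
    (t : ℝ) (ht : 0 < t)
    (η : Measure ℝ) [IsProbabilityMeasure η]
    (hsupp : η (Set.Iio 0) = 0) (h0 : η {0} = 0)
    (φ : ℝ → ℝ) (hφ : ∀ l : ℝ, 0 < l → 0 ≤ φ l)
    (hLaplace : ∀ l : ℝ, 0 < l →
      ∫ s in Set.Ici (0:ℝ), Real.exp (-l * s) ∂η = Real.exp (-(t * φ l)))
    (A : ℝ) (hA : 0 < A) :
    η (Set.Ioi A) ≤ ENNReal.ofReal (t / (1 - Real.exp (-1))) *
      ∫⁻ l in Set.Ioo (0:ℝ) A⁻¹, ENNReal.ofReal (φ l / l) :=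
  stmt_0_general t ht η φ hLaplace A hA
end

section
/- Let η be a Borel measure on (0,∞) with η((u,∞)) < ∞ for every u > 0, let t > 0, and let φ : (0,∞) → [0,∞) be measurable. Suppose that ∫_0^∞ e^{−λu} η((u,∞)) du ≤ t φ(λ)/λ for every λ > 0. Then for every A > 0 one has (1 − e^{−1}) · η((A,∞)) ≤ t · ∫_0^{1/A} (φ(λ)/λ) dλ. -/
/-!
Since `u ↦ η((u,∞))` is nonincreasing, restricting the Laplace-type integral to `(0, A)` gives
`A e^{-λA} η((A,∞)) ≤ tφ(λ)/λ` for every `λ > 0`. Integrating over `λ ∈ (0, 1/A)` and using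
`∫_0^{1/A} A e^{-λA} dλ = 1 - e^{-1}` yields the estimate.
-/

open MeasureTheory

theorem intervalIntegral_mul_exp_neg_mul (A b : ℝ) :
    ∫ l in (0:ℝ)..b, A * Real.exp (-l * A) = 1 - Real.exp (-b * A) := by
  have hderiv : ∀ l : ℝ, HasDerivAt (fun l => -Real.exp (-l * A)) (A * Real.exp (-l * A)) l :=
    fun l => ((hasDerivAt_neg l).mul_const A).exp.fun_neg.congr_deriv (by ring)
  rw [intervalIntegral.integral_eq_sub_of_hasDerivAt (fun l _ => hderiv l)
    ((by fun_prop : Continuous fun l : ℝ => A * Real.exp (-l * A)).intervalIntegrable _ _)]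
  simp only [neg_mul, neg_zero, zero_mul, Real.exp_zero, sub_neg_eq_add]
  ring

theorem lintegral_Ioo_mul_exp_neg_mul {A b : ℝ} (hA : 0 ≤ A) (hb : 0 ≤ b) :
    ∫⁻ l in Set.Ioo 0 b, ENNReal.ofReal (A * Real.exp (-l * A))
      = ENNReal.ofReal (1 - Real.exp (-b * A)) := by
  have hint : IntegrableOn (fun l : ℝ => A * Real.exp (-l * A)) (Set.Ioo 0 b) :=
    (by fun_prop : Continuous fun l : ℝ => A * Real.exp (-l * A)).integrableOn_Icc.mono_set
      Set.Ioo_subset_Icc_self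
  rw [← ofReal_integral_eq_lintegral_ofReal hint (.of_forall fun l => by positivity),
    ← integral_Ioc_eq_integral_Ioo, ← intervalIntegral.integral_of_le hb,
    intervalIntegral_mul_exp_neg_mul]

theorem mul_exp_neg_mul_le_lintegral_of_antitone {f : ℝ → ENNReal} (hf : Antitone f)
    {l A : ℝ} (hl : 0 ≤ l) (hA : 0 ≤ A) :
    ENNReal.ofReal (A * Real.exp (-l * A)) * f A
      ≤ ∫⁻ u in Set.Ioi 0, ENNReal.ofReal (Real.exp (-l * u)) * f u :=
  calc ENNReal.ofReal (A * Real.exp (-l * A)) * f A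
      = ∫⁻ _ in Set.Ioo 0 A, ENNReal.ofReal (Real.exp (-l * A)) * f A := by
        rw [setLIntegral_const, Real.volume_Ioo, sub_zero, ENNReal.ofReal_mul hA]
        ring
    _ ≤ ∫⁻ u in Set.Ioo 0 A, ENNReal.ofReal (Real.exp (-l * u)) * f u :=
        setLIntegral_mono' measurableSet_Ioo fun u hu => mul_le_mul'
          (ENNReal.ofReal_le_ofReal (Real.exp_le_exp.2 (by nlinarith [hu.2])))
          (hf hu.2.le)
    _ ≤ ∫⁻ u in Set.Ioi 0, ENNReal.ofReal (Real.exp (-l * u)) * f u :=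
        lintegral_mono_set Set.Ioo_subset_Ioi_self

theorem stmt_2_general
    (η : Measure ℝ)
    (t : ℝ) (ht : 0 < t)
    (φ : ℝ → ℝ)
    (hyp : ∀ l : ℝ, 0 < l →
      ∫⁻ u in Set.Ioi (0:ℝ), ENNReal.ofReal (Real.exp (-l * u)) * η (Set.Ioi u)
        ≤ ENNReal.ofReal (t * φ l / l))
    (A : ℝ) (hA : 0 < A) :
    ENNReal.ofReal (1 - Real.exp (-1)) * η (Set.Ioi A)
      ≤ ENNReal.ofReal t * ∫⁻ l in Set.Ioo (0:ℝ) A⁻¹, ENNReal.ofReal (φ l / l) := by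
  have htail : Antitone fun u : ℝ => η (Set.Ioi u) :=
    fun _ _ hab => measure_mono (Set.Ioi_subset_Ioi hab)
  calc ENNReal.ofReal (1 - Real.exp (-1)) * η (Set.Ioi A)
      = ∫⁻ l in Set.Ioo 0 A⁻¹, ENNReal.ofReal (A * Real.exp (-l * A)) * η (Set.Ioi A) := by
        rw [lintegral_mul_const _ (by fun_prop),
          lintegral_Ioo_mul_exp_neg_mul hA.le (by positivity), neg_mul, inv_mul_cancel₀ hA.ne']
    _ ≤ ∫⁻ l in Set.Ioo 0 A⁻¹, ENNReal.ofReal (t * φ l / l) :=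
        setLIntegral_mono' measurableSet_Ioo fun l hl =>
          (mul_exp_neg_mul_le_lintegral_of_antitone htail hl.1.le hA.le).trans (hyp l hl.1)
    _ = ENNReal.ofReal t * ∫⁻ l in Set.Ioo 0 A⁻¹, ENNReal.ofReal (φ l / l) := by
        simp_rw [← lintegral_const_mul' _ _ ENNReal.ofReal_ne_top, mul_div_assoc,
          ENNReal.ofReal_mul ht.le]

/-- Second step of the subordinator tail estimate (Lemma 2.1 of the paper):
integrating `e^{-λA}·A·η((A,∞)) ≤ ∫_0^A e^{-λu} η((u,∞)) du ≤ tφ(λ)/λ` over `λ ∈ (0,1/A)`. -/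
theorem stmt_2
    (η : Measure ℝ) (hfin : ∀ u : ℝ, 0 < u → η (Set.Ioi u) < ⊤)
    (t : ℝ) (ht : 0 < t)
    (φ : ℝ → ℝ) (hφmeas : Measurable φ) (hφ : ∀ l : ℝ, 0 < l → 0 ≤ φ l)
    (hyp : ∀ l : ℝ, 0 < l →
      ∫⁻ u in Set.Ioi (0:ℝ), ENNReal.ofReal (Real.exp (-l * u)) * η (Set.Ioi u)
        ≤ ENNReal.ofReal (t * φ l / l))
    (A : ℝ) (hA : 0 < A) :
    ENNReal.ofReal (1 - Real.exp (-1)) * η (Set.Ioi A)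
      ≤ ENNReal.ofReal t * ∫⁻ l in Set.Ioo (0:ℝ) A⁻¹, ENNReal.ofReal (φ l / l) :=
  stmt_2_general η t ht φ hyp A hA
end

section
/- Let d_w > 0, d > 0, set d_s = 2d/d_w, and let α₁, α₂ ∈ (0, d_w) and ā₁, ā₂ > 0. Then there exists a constant C > 0 such that the following holds: for every t > 0, every probability measure η on (0,∞), and every function φ : (0,∞) → [0,∞) satisfying ∫_{(0,∞)} e^{−λu} dη(u) = e^{−tφ(λ)} for all λ > 0, φ(λ) ≥ ā₁·λ^{α₁/d_w} for λ ∈ (0,1], and φ(λ) ≥ ā₂·λ^{α₂/d_w} for λ ≥ 1, one has ∫_{(0,∞)} u^{−d_s/2} dη(u) ≤ C·(t^{−d/α₁} + t^{−d/α₂}). -/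
/-! With `s = d_s / 2 = d / d_w`, the identity `u^{-s} Γ(s) = ∫_0^∞ l^{s-1} e^{-lu} dl` and
Tonelli turn `Γ(s) ∫ u^{-s} dη` into `∫_0^∞ l^{s-1} e^{-tφ(l)} dl`. On `(0,1]` and on `[1,∞)`
the lower bound `φ(l) ≥ ā_i l^{β_i}`, `β_i = α_i / d_w`, dominates this piece by
`∫_0^∞ l^{s-1} e^{-tā_i l^{β_i}} dl = (tā_i)^{-s/β_i} Γ(s/β_i) / β_i`, and `s / β_i = d / α_i`.
-/

open MeasureTheory Set Real

theorem lintegral_rpow_mul_exp_neg_mul_rpow {s p b : ℝ} (hs : 0 < s) (hp : 0 < p) (hb : 0 < b) :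
    ∫⁻ x in Ioi (0 : ℝ), ENNReal.ofReal (x ^ (s - 1) * exp (-b * x ^ p))
      = ENNReal.ofReal (b ^ (-s / p) * Gamma (s / p) / p) := by
  have hs' : -1 < s - 1 := by linarith
  rw [← ofReal_integral_eq_lintegral_ofReal (integrableOn_rpow_mul_exp_neg_mul_rpow hs' hp hb),
    integral_rpow_mul_exp_neg_mul_rpow hp hs' hb, sub_add_cancel]
  · ring_nf
  · filter_upwards [ae_restrict_mem measurableSet_Ioi] with x (hx : 0 < x)
    positivity

theorem rpow_neg_mul_Gamma_eq_lintegral {s u : ℝ} (hs : 0 < s) (hu : 0 < u) :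
    ENNReal.ofReal (u ^ (-s) * Gamma s)
      = ∫⁻ l in Ioi (0 : ℝ), ENNReal.ofReal (l ^ (s - 1) * exp (-l * u)) := by
  have h := lintegral_rpow_mul_exp_neg_mul_rpow hs one_pos hu
  simp only [rpow_one, div_one] at h
  rw [← h]
  refine setLIntegral_congr_fun measurableSet_Ioi fun l _ ↦ ?_
  rw [neg_mul, neg_mul, mul_comm u l]

theorem lintegral_exp_neg_mul_Ioi_eq_ofReal {η : Measure ℝ} [IsFiniteMeasure η] {l : ℝ}
    (hl : 0 ≤ l) :
    ∫⁻ u in Ioi (0 : ℝ), ENNReal.ofReal (exp (-l * u)) ∂η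
      = ENNReal.ofReal (∫ u in Ioi (0 : ℝ), exp (-l * u) ∂η) := by
  have hint : IntegrableOn (fun u ↦ exp (-l * u)) (Ioi 0) η := by
    refine Integrable.mono' (integrable_const 1) (by fun_prop) ?_
    filter_upwards [ae_restrict_mem measurableSet_Ioi] with u (hu : 0 < u)
    rw [norm_of_nonneg (exp_pos _).le, exp_le_one_iff]
    nlinarith
  exact (ofReal_integral_eq_lintegral_ofReal hint (ae_of_all _ fun _ ↦ (exp_pos _).le)).symm

theorem lintegral_rpow_neg_mul_Gamma {η : Measure ℝ} [SFinite η] {s : ℝ} (hs : 0 < s) :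
    (∫⁻ u in Ioi (0 : ℝ), ENNReal.ofReal (u ^ (-s)) ∂η) * ENNReal.ofReal (Gamma s)
      = ∫⁻ l in Ioi (0 : ℝ), ENNReal.ofReal (l ^ (s - 1))
          * ∫⁻ u in Ioi (0 : ℝ), ENNReal.ofReal (exp (-l * u)) ∂η := by
  calc (∫⁻ u in Ioi (0 : ℝ), ENNReal.ofReal (u ^ (-s)) ∂η) * ENNReal.ofReal (Gamma s)
      = ∫⁻ u in Ioi (0 : ℝ), (∫⁻ l in Ioi (0 : ℝ),
          ENNReal.ofReal (l ^ (s - 1) * exp (-l * u))) ∂η := by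
        rw [← lintegral_mul_const' _ _ ENNReal.ofReal_ne_top]
        refine setLIntegral_congr_fun measurableSet_Ioi fun u (hu : 0 < u) ↦ ?_
        rw [← ENNReal.ofReal_mul (rpow_nonneg hu.le _), rpow_neg_mul_Gamma_eq_lintegral hs hu]
    _ = ∫⁻ l in Ioi (0 : ℝ), ∫⁻ u in Ioi (0 : ℝ),
          ENNReal.ofReal (l ^ (s - 1) * exp (-l * u)) ∂η :=
        lintegral_lintegral_swap (Measurable.aemeasurable (by fun_prop))
    _ = _ := by
        refine setLIntegral_congr_fun measurableSet_Ioi fun l (hl : 0 < l) ↦ ?_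
        simp_rw [ENNReal.ofReal_mul (rpow_nonneg hl.le _)]
        rw [lintegral_const_mul' _ _ ENNReal.ofReal_ne_top]

theorem lintegral_rpow_neg_mul_Gamma_of_laplace {η : Measure ℝ} [IsFiniteMeasure η] {s t : ℝ}
    {φ : ℝ → ℝ} (hs : 0 < s)
    (hLap : ∀ l : ℝ, 0 < l →
      ∫ u in Ioi (0 : ℝ), exp (-l * u) ∂η = exp (-(t * φ l))) :
    (∫⁻ u in Ioi (0 : ℝ), ENNReal.ofReal (u ^ (-s)) ∂η) * ENNReal.ofReal (Gamma s)
      = ∫⁻ l in Ioi (0 : ℝ),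
          ENNReal.ofReal (l ^ (s - 1)) * ENNReal.ofReal (exp (-(t * φ l))) := by
  rw [lintegral_rpow_neg_mul_Gamma hs]
  refine setLIntegral_congr_fun measurableSet_Ioi fun l (hl : 0 < l) ↦ ?_
  rw [lintegral_exp_neg_mul_Ioi_eq_ofReal hl.le, hLap l hl]

theorem setLIntegral_rpow_mul_exp_neg_le {S : Set ℝ} (hS : S ⊆ Ioi 0) {φ : ℝ → ℝ}
    {s p a t : ℝ} (hs : 0 < s) (hp : 0 < p) (ha : 0 < a) (ht : 0 < t)
    (hφ : ∀ l ∈ S, a * l ^ p ≤ φ l) :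
    ∫⁻ l in S, ENNReal.ofReal (l ^ (s - 1)) * ENNReal.ofReal (exp (-(t * φ l)))
      ≤ ENNReal.ofReal (t ^ (-(s / p)) * (a ^ (-(s / p)) * Gamma (s / p) / p)) := by
  calc ∫⁻ l in S, ENNReal.ofReal (l ^ (s - 1)) * ENNReal.ofReal (exp (-(t * φ l)))
      ≤ ∫⁻ l in S, ENNReal.ofReal (l ^ (s - 1) * exp (-(t * a) * l ^ p)) := by
        refine setLIntegral_mono (by fun_prop) fun l hl ↦ ?_
        rw [ENNReal.ofReal_mul (rpow_nonneg (hS hl).out.le _)]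
        gcongr
        have := mul_le_mul_of_nonneg_left (hφ l hl) ht.le
        linarith
    _ ≤ ∫⁻ l in Ioi (0 : ℝ), ENNReal.ofReal (l ^ (s - 1) * exp (-(t * a) * l ^ p)) :=
        lintegral_mono_set hS
    _ = _ := by
        rw [lintegral_rpow_mul_exp_neg_mul_rpow hs hp (by positivity),
          mul_rpow ht.le ha.le, neg_div]
        ring_nf

theorem lintegral_rpow_mul_exp_neg_le_of_rpow_le {φ : ℝ → ℝ} {s p₁ p₂ a₁ a₂ t : ℝ}
    (hs : 0 < s) (hp₁ : 0 < p₁) (hp₂ : 0 < p₂) (ha₁ : 0 < a₁) (ha₂ : 0 < a₂) (ht : 0 < t)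
    (hφ₁ : ∀ l : ℝ, 0 < l → l ≤ 1 → a₁ * l ^ p₁ ≤ φ l)
    (hφ₂ : ∀ l : ℝ, 1 ≤ l → a₂ * l ^ p₂ ≤ φ l) :
    ∫⁻ l in Ioi (0 : ℝ), ENNReal.ofReal (l ^ (s - 1)) * ENNReal.ofReal (exp (-(t * φ l)))
      ≤ ENNReal.ofReal (t ^ (-(s / p₁)) * (a₁ ^ (-(s / p₁)) * Gamma (s / p₁) / p₁))
        + ENNReal.ofReal
            (t ^ (-(s / p₂)) * (a₂ ^ (-(s / p₂)) * Gamma (s / p₂) / p₂)) := by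
  rw [← Ioc_union_Ioi_eq_Ioi zero_le_one,
    lintegral_union measurableSet_Ioi Ioc_disjoint_Ioi_same]
  gcongr
  · exact setLIntegral_rpow_mul_exp_neg_le Ioc_subset_Ioi_self hs hp₁ ha₁ ht
      fun l hl ↦ hφ₁ l hl.1 hl.2
  · exact setLIntegral_rpow_mul_exp_neg_le (Ioi_subset_Ioi zero_le_one) hs hp₂ ha₂ ht
      fun l hl ↦ hφ₂ l hl.le

theorem ENNReal.le_ofReal_div_of_mul_le {x : ENNReal} {a b : ℝ} (hb : 0 < b)
    (h : x * ENNReal.ofReal b ≤ ENNReal.ofReal a) : x ≤ ENNReal.ofReal (a / b) := by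
  rw [ENNReal.ofReal_div_of_pos hb]
  exact (ENNReal.le_div_iff_mul_le (Or.inl (ENNReal.ofReal_pos.mpr hb).ne')
    (Or.inl ENNReal.ofReal_ne_top)).mpr h

/-- Lemma 4.1(b) of the paper: under the power lower bounds on the Laplace exponent `φ`,
the law `η` of the subordinator at time `t` satisfies
`∫ u^{-d_s/2} dη(u) ≤ C (t^{-d/α₁} + t^{-d/α₂})` with `d_s = 2d/d_w`. -/
theorem stmt_6 (d_w d ds α₁ α₂ a₁ a₂ : ℝ)
    (hdw : 0 < d_w) (hd : 0 < d) (hds : ds = 2 * d / d_w)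
    (hα₁ : 0 < α₁ ∧ α₁ < d_w) (hα₂ : 0 < α₂ ∧ α₂ < d_w)
    (ha₁ : 0 < a₁) (ha₂ : 0 < a₂) :
    ∃ C : ℝ, 0 < C ∧
      ∀ (t : ℝ), 0 < t →
      ∀ (η : Measure ℝ), IsProbabilityMeasure η → η (Set.Iic 0) = 0 →
      ∀ (φ : ℝ → ℝ), (∀ l : ℝ, 0 < l → 0 ≤ φ l) →
        (∀ l : ℝ, 0 < l →
          ∫ u in Set.Ioi (0:ℝ), Real.exp (-l * u) ∂η = Real.exp (-(t * φ l))) →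
        (∀ l : ℝ, 0 < l → l ≤ 1 → a₁ * l ^ (α₁ / d_w) ≤ φ l) →
        (∀ l : ℝ, 1 ≤ l → a₂ * l ^ (α₂ / d_w) ≤ φ l) →
        ∫⁻ u in Set.Ioi (0:ℝ), ENNReal.ofReal (u ^ (-(ds / 2))) ∂η
          ≤ ENNReal.ofReal (C * (t ^ (-(d / α₁)) + t ^ (-(d / α₂)))) := by
  obtain ⟨hα₁, -⟩ := hα₁
  obtain ⟨hα₂, -⟩ := hα₂
  have hs : 0 < d / d_w := div_pos hd hdw
  have hsp₁ : d / d_w / (α₁ / d_w) = d / α₁ := div_div_div_cancel_right₀ hdw.ne' _ _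
  have hsp₂ : d / d_w / (α₂ / d_w) = d / α₂ := div_div_div_cancel_right₀ hdw.ne' _ _
  set K₁ := a₁ ^ (-(d / α₁)) * Gamma (d / α₁) / (α₁ / d_w)
  set K₂ := a₂ ^ (-(d / α₂)) * Gamma (d / α₂) / (α₂ / d_w)
  have hK₁ : 0 < K₁ := by have := Gamma_pos_of_pos (div_pos hd hα₁); positivity
  have hK₂ : 0 < K₂ := by have := Gamma_pos_of_pos (div_pos hd hα₂); positivity
  have hΓ := Gamma_pos_of_pos hs
  refine ⟨(K₁ + K₂) / Gamma (d / d_w), by positivity, ?_⟩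
  intro t ht η _ _ φ _ hLap hφ₁ hφ₂
  have hbound : (∫⁻ u in Ioi (0 : ℝ), ENNReal.ofReal (u ^ (-(d / d_w))) ∂η)
      * ENNReal.ofReal (Gamma (d / d_w))
      ≤ ENNReal.ofReal (t ^ (-(d / α₁)) * K₁ + t ^ (-(d / α₂)) * K₂) := by
    rw [lintegral_rpow_neg_mul_Gamma_of_laplace hs hLap,
      ENNReal.ofReal_add (by positivity) (by positivity)]
    simpa only [hsp₁, hsp₂] using lintegral_rpow_mul_exp_neg_le_of_rpow_le hs
      (div_pos hα₁ hdw) (div_pos hα₂ hdw) ha₁ ha₂ ht hφ₁ hφ₂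
  rw [show -(ds / 2) = -(d / d_w) by rw [hds]; ring]
  refine (ENNReal.le_ofReal_div_of_mul_le hΓ hbound).trans (ENNReal.ofReal_le_ofReal ?_)
  rw [div_mul_eq_mul_div]
  gcongr
  nlinarith [rpow_pos_of_pos ht (-(d / α₁)), rpow_pos_of_pos ht (-(d / α₂))]
end

section
/- Let (X, d) be a metric space equipped with a Borel measure m that is Ahlfors s-regular with constant c ≥ 1, i.e. c^{−1}·r^s ≤ m(B(x,r)) ≤ c·r^s for every x ∈ X and r > 0, where s > 0. Let θ > 0, K > 0, R₀ > 0, and let W : X × X → [0,∞) be a measurable function satisfying W(x,y) ≥ K·d(x,y)^{−(s+θ)} whenever d(x,y) ≥ R₀. Then there exists a constant C > 0, depending only on c, s and θ, such that for every t > 0 with t^{1/(s+θ)} ≥ R₀ and every x ∈ X: ∫_{{y : d(x,y) > t^{1/(s+θ)}}} (1 − e^{−t·W(x,y)}) dm(y) ≥ C·K·e^{−K}·t^{s/(s+θ)}. -/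
open MeasureTheory

set_option maxHeartbeats 1000000 in
/-- The core computation in the second part of Proposition 4.1 of the paper: if `m` is
Ahlfors `s`-regular and `W(x,y) ≥ K d(x,y)^{-(s+θ)}` for `d(x,y) ≥ R₀`, then for
`a = t^{1/(s+θ)} ≥ R₀` one has
`∫_{d(x,y)>a} (1 - e^{-t W(x,y)}) dm(y) ≥ C K e^{-K} t^{s/(s+θ)}` with `C = C(c,s,θ)`. -/
theorem stmt_9
    {X : Type*} [MetricSpace X] [MeasurableSpace X] [OpensMeasurableSpace X]
    (m : Measure X) (c s : ℝ) (hc : 1 ≤ c) (hs : 0 < s)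
    (hreg : ∀ (x : X) (r : ℝ), 0 < r →
      ENNReal.ofReal (c⁻¹ * r ^ s) ≤ m (Metric.ball x r) ∧
      m (Metric.ball x r) ≤ ENNReal.ofReal (c * r ^ s))
    (θ K R₀ : ℝ) (hθ : 0 < θ) (hK : 0 < K) (hR₀ : 0 < R₀)
    (W : X → X → ℝ) (hWmeas : Measurable (Function.uncurry W))
    (hWnonneg : ∀ x y, 0 ≤ W x y)
    (hW : ∀ x y, R₀ ≤ dist x y → K * dist x y ^ (-(s + θ)) ≤ W x y) :
    ∃ C : ℝ, 0 < C ∧ ∀ (t : ℝ), 0 < t → R₀ ≤ t ^ (1 / (s + θ)) → ∀ x : X,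
      ENNReal.ofReal (C * K * Real.exp (-K) * t ^ (s / (s + θ)))
        ≤ ∫⁻ y in {y : X | t ^ (1 / (s + θ)) < dist x y},
            ENNReal.ofReal (1 - Real.exp (-(t * W x y))) ∂m := by
  have hsθ : 0 < s + θ := by linarith
  have hc0 : 0 < c := lt_of_lt_of_le one_pos hc
  set B : ℝ := 2 ^ (s + 1) * c ^ 2 with hBdef
  have hB1 : (1 : ℝ) < B := by
    have h2 : (1:ℝ) < 2 ^ (s+1) := Real.one_lt_rpow_iff_of_pos two_pos |>.2
      (Or.inl ⟨one_lt_two, by linarith⟩)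
    have hc2 : (1:ℝ) ≤ c ^ 2 := by nlinarith
    calc (1:ℝ) < 2 ^ (s+1) := h2
      _ ≤ 2 ^ (s+1) * c ^ 2 := le_mul_of_one_le_right (by positivity) hc2
  set L : ℝ := B ^ (1 / s) with hLdef
  have hL1 : 1 < L := (Real.one_lt_rpow_iff_of_pos (by linarith)).2
    (Or.inl ⟨hB1, by positivity⟩)
  have hL0 : 0 < L := by linarith
  refine ⟨L ^ (-(s + θ)), Real.rpow_pos_of_pos hL0 _, ?_⟩
  set C : ℝ := L ^ (-(s + θ)) with hCdef
  have hC0 : 0 < C := Real.rpow_pos_of_pos hL0 _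
  have hC1 : C ≤ 1 := Real.rpow_le_one_of_one_le_of_nonpos hL1.le (by linarith)
  intro t ht ha x
  set a : ℝ := t ^ (1 / (s + θ)) with hadef
  have ha0 : 0 < a := Real.rpow_pos_of_pos ht _
  have haspow : a ^ (s + θ) = t := by
    rw [hadef, ← Real.rpow_mul ht.le, one_div_mul_cancel hsθ.ne', Real.rpow_one]
  have has : a ^ s = t ^ (s / (s + θ)) := by
    rw [hadef, ← Real.rpow_mul ht.le, one_div_mul_eq_div]
  -- the annulus
  set A : Set X := Metric.ball x (L * a) \ Metric.closedBall x a with hAdef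
  have hAmeas : MeasurableSet A :=
    measurableSet_ball.diff measurableSet_closedBall
  have hsub : A ⊆ {y : X | a < dist x y} := by
    intro y hy
    have := hy.2
    simp only [Metric.mem_closedBall, not_le] at this
    simpa [Set.mem_setOf_eq, dist_comm] using this
  -- measure lower bound on A
  have hcb_fin : m (Metric.closedBall x a) ≤ ENNReal.ofReal (c * (2 * a) ^ s) := by
    refine le_trans (measure_mono ?_) (hreg x (2 * a) (by linarith)).2
    exact Metric.closedBall_subset_ball (by linarith)
  have hmA : ENNReal.ofReal (a ^ s) ≤ m A := by
    have hdiff : m A = m (Metric.ball x (L * a)) - m (Metric.closedBall x a) := by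
      rw [hAdef]
      refine measure_diff ?_ measurableSet_closedBall.nullMeasurableSet
        (lt_of_le_of_lt hcb_fin ENNReal.ofReal_lt_top).ne
      exact Metric.closedBall_subset_ball (by nlinarith)
    have hball : ENNReal.ofReal (c⁻¹ * (L * a) ^ s) ≤ m (Metric.ball x (L * a)) :=
      (hreg x (L * a) (by positivity)).1
    have hLs : L ^ s = B := by
      rw [hLdef, ← Real.rpow_mul (by linarith : (0:ℝ) ≤ B), one_div_mul_cancel hs.ne',
        Real.rpow_one]
    have hkey : a ^ s + c * (2 * a) ^ s ≤ c⁻¹ * (L * a) ^ s := by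
      have h1 : (L * a) ^ s = L ^ s * a ^ s := Real.mul_rpow hL0.le ha0.le
      have h2 : (2 * a) ^ s = 2 ^ s * a ^ s := Real.mul_rpow two_pos.le ha0.le
      have h3 : (2:ℝ) ^ (s + 1) = 2 ^ s * 2 := by
        rw [Real.rpow_add two_pos, Real.rpow_one]
      have h4 : c⁻¹ * (L ^ s * a ^ s) = 2 ^ s * 2 * c * a ^ s := by
        rw [hLs, hBdef, h3]; field_simp
      have h2s : (1:ℝ) ≤ 2 ^ s := Real.one_le_rpow one_le_two hs.le
      have has0 : 0 < a ^ s := Real.rpow_pos_of_pos ha0 _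
      have h5 : (1:ℝ) ≤ c * 2 ^ s := by nlinarith
      have h6 : 1 * a ^ s ≤ (c * 2 ^ s) * a ^ s := mul_le_mul_of_nonneg_right h5 has0.le
      rw [h1, h2, h4]
      nlinarith [h6]
    calc ENNReal.ofReal (a ^ s)
        ≤ ENNReal.ofReal (c⁻¹ * (L * a) ^ s) - ENNReal.ofReal (c * (2 * a) ^ s) := by
          rw [← ENNReal.ofReal_sub _ (by positivity)]
          exact ENNReal.ofReal_le_ofReal (by linarith)
      _ ≤ m (Metric.ball x (L * a)) - m (Metric.closedBall x a) :=
          tsub_le_tsub hball hcb_fin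
      _ = m A := hdiff.symm
  -- pointwise lower bound on A
  have hpt : ∀ y ∈ A, ENNReal.ofReal (C * K * Real.exp (-K))
      ≤ ENNReal.ofReal (1 - Real.exp (-(t * W x y))) := by
    intro y hy
    have hy1 : a < dist x y := hsub hy
    have hy2 : dist x y < L * a := by
      have := hy.1
      simpa [Metric.mem_ball, dist_comm] using this
    have hdpos : 0 < dist x y := lt_trans ha0 hy1
    have hWlb : K * (L * a) ^ (-(s + θ)) ≤ W x y := by
      refine le_trans ?_ (hW x y (le_trans ha hy1.le))
      have := Real.rpow_le_rpow_of_nonpos hdpos hy2.le (by linarith : -(s+θ) ≤ 0)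
      nlinarith
    have htW : C * K ≤ t * W x y := by
      have hmul : (L * a) ^ (-(s + θ)) = L ^ (-(s + θ)) * a ^ (-(s + θ)) :=
        Real.mul_rpow hL0.le ha0.le
      have hainv : a ^ (-(s + θ)) = t⁻¹ := by
        rw [Real.rpow_neg ha0.le, haspow]
      have : t * (K * (L * a) ^ (-(s + θ))) = C * K := by
        rw [hmul, hainv, hCdef]; field_simp
      calc C * K = t * (K * (L * a) ^ (-(s + θ))) := this.symm
        _ ≤ t * W x y := by
            exact mul_le_mul_of_nonneg_left hWlb ht.le
    have hCK0 : 0 < C * K := by positivity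
    have hCKK : C * K ≤ K := by nlinarith
    -- 1 - e^{-u} ≥ u e^{-u} with u = C*K, then monotonicity
    refine ENNReal.ofReal_le_ofReal ?_
    have hmono : Real.exp (-(t * W x y)) ≤ Real.exp (-(C * K)) :=
      Real.exp_le_exp.2 (by linarith)
    have hexpK : Real.exp (-K) ≤ Real.exp (-(C * K)) := Real.exp_le_exp.2 (by linarith)
    have hkey : (C * K) * Real.exp (-(C * K)) ≤ 1 - Real.exp (-(C * K)) := by
      have h1 := Real.add_one_le_exp (C * K)
      have h2 : Real.exp (-(C * K)) * Real.exp (C * K) = 1 := by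
        rw [← Real.exp_add]; simp
      have h3 : 0 < Real.exp (-(C * K)) := Real.exp_pos _
      nlinarith
    have : (C * K) * Real.exp (-K) ≤ (C * K) * Real.exp (-(C * K)) :=
      mul_le_mul_of_nonneg_left hexpK hCK0.le
    linarith
  -- assemble
  calc ENNReal.ofReal (C * K * Real.exp (-K) * t ^ (s / (s + θ)))
      = ENNReal.ofReal (C * K * Real.exp (-K)) * ENNReal.ofReal (a ^ s) := by
        rw [← ENNReal.ofReal_mul (by positivity), has]
    _ ≤ ENNReal.ofReal (C * K * Real.exp (-K)) * m A :=
        mul_le_mul_right hmA _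
    _ = ∫⁻ _ in A, ENNReal.ofReal (C * K * Real.exp (-K)) ∂m := by
        rw [setLIntegral_const]
    _ ≤ ∫⁻ y in A, ENNReal.ofReal (1 - Real.exp (-(t * W x y))) ∂m :=
        setLIntegral_mono' hAmeas hpt
    _ ≤ ∫⁻ y in {y : X | a < dist x y}, ENNReal.ofReal (1 - Real.exp (-(t * W x y))) ∂m :=
        lintegral_mono_set hsub
end

section
/- Let t > 0, let η be a probability measure on [0,∞), and let φ : (0,∞) → [0,∞) satisfy ∫_{[0,∞)} e^{−λs} dη(s) = e^{−tφ(λ)} for every λ > 0. Suppose moreover that there are constants c₁ > 0, γ > 0 and s₀ > 0 such that φ(λ) ≤ c₁·λ^γ for all λ ∈ (0, s₀]. Then for every A ≥ 1/s₀ one has η((A,∞)) ≤ (c₁·t)/(γ·(1 − e^{−1})) · A^{−γ}. -/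
/-!
Chernoff-type argument at a single point of the Laplace transform: for `λ > 0`,
`(1 - e^{-λA}) η((A,∞)) ≤ ∫ (1 - e^{-λs}) dη = 1 - e^{-tφ(λ)} ≤ tφ(λ) ≤ c₁ t λ^γ`.
Taking `λ = θ/A` with `θ ∈ (0,1]` chosen so that `γ θ^γ (1 - e⁻¹) ≤ 1 - e^{-θ}` gives the bound;
`θ ≤ 1` keeps `λ ≤ s₀` because `A ≥ 1/s₀`.
-/

open MeasureTheory Real Set

lemma mul_one_sub_exp_neg_one_le {x : ℝ} (hx₀ : 0 ≤ x) (hx₁ : x ≤ 1) :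
    x * (1 - exp (-1)) ≤ 1 - exp (-x) := by
  have h := convexOn_exp.2 (mem_univ 0) (mem_univ (-1)) (sub_nonneg.2 hx₁) hx₀ (by ring)
  simp only [smul_eq_mul, mul_zero, mul_neg_one, zero_add, exp_zero, mul_one] at h
  linarith

lemma exists_mul_rpow_mul_le_one_sub_exp_neg {γ : ℝ} (hγ : 0 < γ) :
    ∃ θ, 0 < θ ∧ θ ≤ 1 ∧ γ * θ ^ γ * (1 - exp (-1)) ≤ 1 - exp (-θ) := by
  suffices ∃ θ, 0 < θ ∧ θ ≤ 1 ∧ γ * θ ^ γ ≤ θ by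
    obtain ⟨θ, hθ₀, hθ₁, hθ⟩ := this
    have he : 0 ≤ 1 - exp (-1) := sub_nonneg.2 (exp_le_one_iff.2 (by norm_num))
    exact ⟨θ, hθ₀, hθ₁,
      (mul_le_mul_of_nonneg_right hθ he).trans (mul_one_sub_exp_neg_one_le hθ₀.le hθ₁)⟩
  rcases le_or_gt γ 1 with hγ₁ | hγ₁
  · exact ⟨1, one_pos, le_rfl, by simpa using hγ₁⟩
  · -- `θ = γ^{-1/(γ-1)}` solves `γ θ^(γ-1) = 1`
    have hexp : -(γ - 1)⁻¹ ≤ 0 := neg_nonpos.2 (inv_nonneg.2 (sub_nonneg.2 hγ₁.le))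
    refine ⟨γ ^ (-(γ - 1)⁻¹), rpow_pos_of_pos hγ _, rpow_le_one_of_one_le_of_nonpos hγ₁.le hexp,
      le_of_eq ?_⟩
    have hne : γ - 1 ≠ 0 := sub_ne_zero.2 hγ₁.ne'
    nth_rewrite 1 [← rpow_one γ]
    rw [← rpow_mul hγ.le, ← rpow_add hγ]
    congr 1
    field_simp
    ring

lemma mul_measureReal_Ioi_le_one_sub_setIntegral_exp {η : Measure ℝ} [IsProbabilityMeasure η]
    {l A : ℝ} (hl : 0 ≤ l) (hA : 0 ≤ A) :
    (1 - exp (-(l * A))) * η.real (Ioi A) ≤ 1 - ∫ s in Ici 0, exp (-l * s) ∂η := by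
  have hexp_le : ∀ s ∈ Ici (0 : ℝ), exp (-l * s) ≤ 1 := fun s hs =>
    exp_le_one_iff.2 (by nlinarith [mem_Ici.1 hs])
  have hint : IntegrableOn (fun s => exp (-l * s)) (Ici 0) η := by
    refine Measure.integrableOn_of_bounded (M := 1) (measure_ne_top η _) (by fun_prop) ?_
    filter_upwards [ae_restrict_mem measurableSet_Ici] with s hs
    rw [norm_of_nonneg (exp_pos _).le]
    exact hexp_le s hs
  have hone : IntegrableOn (fun _ => (1 : ℝ)) (Ici 0) η := integrableOn_const (measure_ne_top η _)
  have hint' : IntegrableOn (fun s => 1 - exp (-l * s)) (Ici 0) η := hone.sub hint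
  have hsub : Ioi A ⊆ Ici 0 := Ioi_subset_Ici hA
  calc (1 - exp (-(l * A))) * η.real (Ioi A)
      ≤ ∫ s in Ioi A, (1 - exp (-l * s)) ∂η := by
        refine setIntegral_ge_of_const_le_real measurableSet_Ioi (measure_ne_top η _) ?_
          (hint'.mono_set hsub)
        intro s hs
        have : l * A ≤ l * s := mul_le_mul_of_nonneg_left (le_of_lt hs) hl
        have := exp_le_exp.2 (neg_le_neg this)
        rw [neg_mul]
        linarith
    _ ≤ ∫ s in Ici 0, (1 - exp (-l * s)) ∂η := by
        refine setIntegral_mono_set hint' ?_ hsub.eventuallyLE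
        filter_upwards [ae_restrict_mem measurableSet_Ici] with s hs
        exact sub_nonneg.2 (hexp_le s hs)
    _ = η.real (Ici 0) - ∫ s in Ici 0, exp (-l * s) ∂η := by
        rw [integral_sub hone hint, setIntegral_const,
          smul_eq_mul, mul_one]
    _ ≤ 1 - ∫ s in Ici 0, exp (-l * s) ∂η := by
        gcongr
        exact measureReal_le_one

theorem stmt_11_general
    (t : ℝ) (ht : 0 < t)
    (η : Measure ℝ) [IsProbabilityMeasure η]
    (φ : ℝ → ℝ)
    (hLaplace : ∀ l : ℝ, 0 < l →
      ∫ s in Set.Ici (0:ℝ), Real.exp (-l * s) ∂η = Real.exp (-(t * φ l)))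
    (c₁ γ s₀ : ℝ) (hγ : 0 < γ) (hs₀ : 0 < s₀)
    (hφle : ∀ l : ℝ, 0 < l → l ≤ s₀ → φ l ≤ c₁ * l ^ γ)
    (A : ℝ) (hA : s₀⁻¹ ≤ A) :
    η (Set.Ioi A) ≤ ENNReal.ofReal (c₁ * t / (γ * (1 - Real.exp (-1))) * A ^ (-γ)) := by
  have hA₀ : 0 < A := (inv_pos.2 hs₀).trans_le hA
  obtain ⟨θ, hθ₀, hθ₁, hθ⟩ := exists_mul_rpow_mul_le_one_sub_exp_neg hγ
  set l := θ / A
  have hl₀ : 0 < l := div_pos hθ₀ hA₀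
  have hls₀ : l ≤ s₀ := by
    rw [div_le_iff₀ hA₀]
    nlinarith [(inv_le_iff_one_le_mul₀' hs₀).1 hA]
  have hlA : l * A = θ := div_mul_cancel₀ _ hA₀.ne'
  have hchernoff : (1 - exp (-θ)) * η.real (Ioi A) ≤ c₁ * t * A ^ (-γ) * θ ^ γ :=
    calc (1 - exp (-θ)) * η.real (Ioi A)
        ≤ 1 - exp (-(t * φ l)) := by
          rw [← hlA, ← hLaplace l hl₀]
          exact mul_measureReal_Ioi_le_one_sub_setIntegral_exp hl₀.le hA₀.le
      _ ≤ t * φ l := by linarith [one_sub_le_exp_neg (t * φ l)]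
      _ ≤ t * (c₁ * l ^ γ) := mul_le_mul_of_nonneg_left (hφle l hl₀ hls₀) ht.le
      _ = c₁ * t * A ^ (-γ) * θ ^ γ := by
          rw [div_rpow hθ₀.le hA₀.le, rpow_neg hA₀.le]
          ring
  have he : 0 < 1 - exp (-1) := sub_pos.2 (exp_lt_one_iff.2 (by norm_num))
  have hreal : η.real (Ioi A) ≤ c₁ * t / (γ * (1 - exp (-1))) * A ^ (-γ) := by
    rw [div_mul_eq_mul_div, le_div_iff₀ (mul_pos hγ he)]
    refine le_of_mul_le_mul_right ?_ (rpow_pos_of_pos hθ₀ γ)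
    calc η.real (Ioi A) * (γ * (1 - exp (-1))) * θ ^ γ
        = γ * θ ^ γ * (1 - exp (-1)) * η.real (Ioi A) := by ring
      _ ≤ (1 - exp (-θ)) * η.real (Ioi A) := mul_le_mul_of_nonneg_right hθ measureReal_nonneg
      _ ≤ c₁ * t * A ^ (-γ) * θ ^ γ := hchernoff
  rw [← ofReal_measureReal]
  exact ENNReal.ofReal_le_ofReal hreal

/-- Consequence of Lemma 2.1 under assumption (L1): if the Laplace exponent satisfies
`φ(λ) ≤ c₁ λ^γ` for `λ ∈ (0,s₀]`, then `η((A,∞)) ≤ c₁ t/(γ(1-e⁻¹)) · A^{-γ}`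
for every `A ≥ 1/s₀`. -/
theorem stmt_11
    (t : ℝ) (ht : 0 < t)
    (η : Measure ℝ) [IsProbabilityMeasure η] (hsupp : η (Set.Iio 0) = 0)
    (φ : ℝ → ℝ) (hφ : ∀ l : ℝ, 0 < l → 0 ≤ φ l)
    (hLaplace : ∀ l : ℝ, 0 < l →
      ∫ s in Set.Ici (0:ℝ), Real.exp (-l * s) ∂η = Real.exp (-(t * φ l)))
    (c₁ γ s₀ : ℝ) (hc₁ : 0 < c₁) (hγ : 0 < γ) (hs₀ : 0 < s₀)
    (hφle : ∀ l : ℝ, 0 < l → l ≤ s₀ → φ l ≤ c₁ * l ^ γ)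
    (A : ℝ) (hA : s₀⁻¹ ≤ A) :
    η (Set.Ioi A) ≤ ENNReal.ofReal (c₁ * t / (γ * (1 - Real.exp (-1))) * A ^ (-γ)) :=
  stmt_11_general t ht η φ hLaplace c₁ γ s₀ hγ hs₀ hφle A hA
end

section
/- Let t > 0, let η be a probability measure on [0,∞), and let φ : (0,∞) → [0,∞) satisfy ∫_{[0,∞)} e^{−λs} dη(s) = e^{−tφ(λ)} for every λ > 0. Suppose there are constants c₁ > 0, γ > 0 and s₀ > 0 such that φ(λ) ≤ c₁·λ^γ for all λ ∈ (0, s₀]. Then ∫_1^∞ η((u,∞)) · (du/u) < ∞. -/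
/-!
Markov's inequality applied to `1 - e^{-λs}`, which is at least `1 - e^{-1}` on `(1/λ, ∞)`, bounds
`η((1/λ, ∞))` by a multiple of `1 - e^{-tφ(λ)} ≤ tφ(λ) ≤ t c₁ λ^γ`. Hence `η((u, ∞)) = O(u^{-γ})`
as `u → ∞`, and `u^{-γ-1}` is integrable at infinity.
-/

open MeasureTheory Set Real

lemma one_sub_exp_neg_one_mul_measureReal_Ioi_inv_le {μ : Measure ℝ} [IsFiniteMeasure μ]
    (h0 : ∀ᵐ s ∂μ, 0 ≤ s) {l : ℝ} (hl : 0 < l) :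
    (1 - exp (-1)) * μ.real (Ioi l⁻¹) ≤ μ.real univ - ∫ s, exp (-l * s) ∂μ := by
  have hint : Integrable (fun s => exp (-l * s)) μ := by
    refine Integrable.of_bound (by fun_prop) 1 ?_
    filter_upwards [h0] with s hs
    rw [norm_of_nonneg (exp_nonneg _), exp_le_one_iff]
    nlinarith
  have hsub : Ioi l⁻¹ ⊆ {s | 1 - exp (-1) ≤ 1 - exp (-l * s)} := by
    intro s hs
    have : 1 < l * s := by rwa [mem_Ioi, inv_lt_iff_one_lt_mul₀' hl] at hs
    simp only [mem_ofPred_eq, sub_le_sub_iff_left, exp_le_exp]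
    linarith
  have hnonneg : 0 ≤ᵐ[μ] fun s => 1 - exp (-l * s) := by
    filter_upwards [h0] with s hs
    simp only [Pi.zero_apply, sub_nonneg, exp_le_one_iff]
    nlinarith
  calc (1 - exp (-1)) * μ.real (Ioi l⁻¹)
      ≤ (1 - exp (-1)) * μ.real {s | 1 - exp (-1) ≤ 1 - exp (-l * s)} :=
        mul_le_mul_of_nonneg_left (measureReal_mono hsub (measure_ne_top μ _))
          one_sub_exp_neg_one_pos.le
    _ ≤ ∫ s, (1 - exp (-l * s)) ∂μ :=
        mul_meas_ge_le_integral_of_nonneg hnonneg ((integrable_const 1).sub hint) _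
    _ = μ.real univ - ∫ s, exp (-l * s) ∂μ := by
        rw [integral_sub (integrable_const 1) hint, integral_const, smul_eq_mul, mul_one]

lemma measureReal_Ioi_le_of_laplace_le {η : Measure ℝ} [IsProbabilityMeasure η]
    (h0 : ∀ᵐ s ∂η, 0 ≤ s) {t : ℝ} (ht : 0 ≤ t) {φ : ℝ → ℝ}
    (hLaplace : ∀ l : ℝ, 0 < l → ∫ s, exp (-l * s) ∂η = exp (-(t * φ l)))
    {c₁ γ s₀ : ℝ} (hs₀ : 0 < s₀) (hφle : ∀ l : ℝ, 0 < l → l ≤ s₀ → φ l ≤ c₁ * l ^ γ)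
    {u : ℝ} (hu : s₀⁻¹ ≤ u) :
    η.real (Ioi u) ≤ t * c₁ / (1 - exp (-1)) * u ^ (-γ) := by
  have hu0 : 0 < u := (inv_pos.2 hs₀).trans_le hu
  have hmarkov := one_sub_exp_neg_one_mul_measureReal_Ioi_inv_le h0 (inv_pos.2 hu0)
  rw [inv_inv, hLaplace _ (inv_pos.2 hu0), probReal_univ] at hmarkov
  have hφu : t * φ u⁻¹ ≤ t * (c₁ * u ^ (-γ)) := by
    rw [rpow_neg hu0.le, ← inv_rpow hu0.le]
    exact mul_le_mul_of_nonneg_left (hφle _ (inv_pos.2 hu0) (inv_le_of_inv_le₀ hs₀ hu)) ht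
  rw [div_mul_eq_mul_div, le_div_iff₀ one_sub_exp_neg_one_pos]
  linarith [one_sub_le_exp_neg (t * φ u⁻¹)]

lemma lintegral_Ioi_one_measure_Ioi_div_lt_top_of_measureReal_Ioi_le {μ : Measure ℝ}
    [IsFiniteMeasure μ] {C γ M : ℝ} (hγ : 0 < γ)
    (htail : ∀ u, M ≤ u → μ.real (Ioi u) ≤ C * u ^ (-γ)) :
    ∫⁻ u in Ioi 1, μ (Ioi u) / ENNReal.ofReal u < ⊤ := by
  set N := max 1 M
  rw [← Ioc_union_Ioi_eq_Ioi (le_max_left 1 M),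
    lintegral_union measurableSet_Ioi (Ioc_disjoint_Ioi le_rfl), ENNReal.add_lt_top]
  constructor
  · refine setLIntegral_lt_top_of_le_nnreal measure_Ioc_lt_top.ne
      ⟨(μ univ).toNNReal, fun u hu => ?_⟩
    calc μ (Ioi u) / ENNReal.ofReal u ≤ μ (Ioi u) / 1 :=
          ENNReal.div_le_div_left (ENNReal.one_le_ofReal.2 hu.1.le) _
      _ ≤ (μ univ).toNNReal := by
          rw [div_one, ENNReal.coe_toNNReal (measure_ne_top μ univ)]
          exact measure_mono (subset_univ _)
  · have hN : 0 < N := one_pos.trans_le (le_max_left 1 M)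
    calc ∫⁻ u in Ioi N, μ (Ioi u) / ENNReal.ofReal u
        ≤ ∫⁻ u in Ioi N, ENNReal.ofReal (C * u ^ (-γ - 1)) := by
          refine setLIntegral_mono (by fun_prop) fun u hu => ?_
          have hu0 : 0 < u := hN.trans hu
          rw [rpow_sub_one hu0.ne', ← mul_div_assoc, ENNReal.ofReal_div_of_pos hu0,
            ← ofReal_measureReal (measure_ne_top μ _)]
          gcongr
          exact htail u ((le_max_right 1 M).trans hu.le)
      _ < ⊤ := ((integrableOn_Ioi_rpow_of_lt (by linarith) hN).const_mul C).lintegral_lt_top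

theorem stmt_12_general
    (t : ℝ) (ht : 0 < t)
    (η : Measure ℝ) [IsProbabilityMeasure η] (hsupp : η (Set.Iio 0) = 0)
    (φ : ℝ → ℝ)
    (hLaplace : ∀ l : ℝ, 0 < l →
      ∫ s in Set.Ici (0:ℝ), Real.exp (-l * s) ∂η = Real.exp (-(t * φ l)))
    (c₁ γ s₀ : ℝ) (hγ : 0 < γ) (hs₀ : 0 < s₀)
    (hφle : ∀ l : ℝ, 0 < l → l ≤ s₀ → φ l ≤ c₁ * l ^ γ) :
    ∫⁻ u in Set.Ioi (1:ℝ), η (Set.Ioi u) / ENNReal.ofReal u < ⊤ := by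
  have h0 : ∀ᵐ s ∂η, 0 ≤ s := by
    rw [ae_iff]; simp only [not_le]; exact hsupp
  rw [Measure.restrict_eq_self_of_ae_mem (s := Ici 0) h0] at hLaplace
  exact lintegral_Ioi_one_measure_Ioi_div_lt_top_of_measureReal_Ioi_le hγ
    fun u hu => measureReal_Ioi_le_of_laplace_le h0 ht.le hLaplace hs₀ hφle hu

/-- Assumption (S2) of the paper holds under (L1): if the Laplace exponent satisfies
`φ(λ) ≤ c₁ λ^γ` for small `λ`, then `∫_1^∞ η((u,∞)) du/u < ∞`. -/
theorem stmt_12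
    (t : ℝ) (ht : 0 < t)
    (η : Measure ℝ) [IsProbabilityMeasure η] (hsupp : η (Set.Iio 0) = 0)
    (φ : ℝ → ℝ) (hφ : ∀ l : ℝ, 0 < l → 0 ≤ φ l)
    (hLaplace : ∀ l : ℝ, 0 < l →
      ∫ s in Set.Ici (0:ℝ), Real.exp (-l * s) ∂η = Real.exp (-(t * φ l)))
    (c₁ γ s₀ : ℝ) (hc₁ : 0 < c₁) (hγ : 0 < γ) (hs₀ : 0 < s₀)
    (hφle : ∀ l : ℝ, 0 < l → l ≤ s₀ → φ l ≤ c₁ * l ^ γ) :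
    ∫⁻ u in Set.Ioi (1:ℝ), η (Set.Ioi u) / ENNReal.ofReal u < ⊤ :=
  stmt_12_general t ht η hsupp φ hLaplace c₁ γ s₀ hγ hs₀ hφle
end
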